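/- arXiv:1504.03601 — 5 statements merged into one kernel-verified Lean document; each statement's English description precedes it below -/
import Mathlib

section
/- If ρ(x,y) = 1 for all distinct x, y in a finite set X, then the fundamental polytope conv{δ_x - δ_y : x ≠ y} equals the Minkowski sum Σ + (-Σ), where Σ = conv{δ_x : x ∈ X}. -/
open scoped Pointwise

theorem stmt_3 (X : Type*) [Fintype X] [DecidableEq X]
    (hn : 2 ≤ Fintype.card X)
    (δ : X → X → ℝ)
    (hδ : ∀ x y : X, δ x y =
      if y = x then ((Fintype.card X : ℝ) - 1) / (Fintype.card X : ℝ)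
      else -1 / (Fintype.card X : ℝ)) :
    convexHull ℝ {v : X → ℝ | ∃ x y : X, x ≠ y ∧ v = δ x - δ y}
      = convexHull ℝ (Set.range δ) + -(convexHull ℝ (Set.range δ)) := by
  set S : Set (X → ℝ) := {v : X → ℝ | ∃ x y : X, x ≠ y ∧ v = δ x - δ y} with hS
  have hadd : convexHull ℝ (Set.range δ) + -(convexHull ℝ (Set.range δ))
      = convexHull ℝ (Set.range δ + -(Set.range δ)) := by
    rw [convexHull_add, convexHull_neg]
  have hset : Set.range δ + -(Set.range δ) = S ∪ {0} := by
    ext v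
    constructor
    · rintro ⟨a, ⟨x, rfl⟩, b, hb, rfl⟩
      rw [Set.mem_neg] at hb
      obtain ⟨y, hy⟩ := hb
      have hbv : b = -(δ y) := by rw [hy]; ring
      subst hbv
      by_cases h : x = y
      · right; subst h; simp [sub_eq_add_neg]
      · left; exact ⟨x, y, h, by abel⟩
    · rintro (⟨x, y, hxy, rfl⟩ | hv)
      · exact ⟨δ x, ⟨x, rfl⟩, -(δ y), by simp, by abel⟩
      · obtain ⟨x, y, hxy⟩ := Fintype.exists_pair_of_one_lt_card (α := X) (by omega)
        simp only [Set.mem_singleton_iff] at hv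
        exact ⟨δ x, ⟨x, rfl⟩, -(δ x), by simp, by simp [hv]⟩
  rw [hadd, hset]
  have h0 : (0 : X → ℝ) ∈ convexHull ℝ S := by
    obtain ⟨x, y, hxy⟩ := Fintype.exists_pair_of_one_lt_card (α := X) (by omega)
    have ha : δ x - δ y ∈ convexHull ℝ S := subset_convexHull ℝ S ⟨x, y, hxy, rfl⟩
    have hb : δ y - δ x ∈ convexHull ℝ S := subset_convexHull ℝ S ⟨y, x, hxy.symm, rfl⟩
    have := (convex_convexHull ℝ S) ha hb (by norm_num : (0:ℝ) ≤ 1/2)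
      (by norm_num : (0:ℝ) ≤ 1/2) (by norm_num)
    convert this using 1
    module
  apply Set.Subset.antisymm
  · exact convexHull_mono Set.subset_union_left
  · refine convexHull_min ?_ (convex_convexHull ℝ S)
    rintro v (hv | hv)
    · exact subset_convexHull ℝ S hv
    · simp only [Set.mem_singleton_iff] at hv; subst hv; exact h0
end

section
/- Let ρ be a symmetric positive function on pairs of distinct points of a finite set X satisfying the triangle inequality (i.e., ρ extended by ρ(x,x)=0 is a metric). Then for every pair of distinct points x, y, the point e_{x,y} = (δ_x - δ_y)/ρ(x,y) does not belong to the interior of the convex hull (in the hyperplane V₀) of the points {e_{u,v} : (u,v) ≠ (x,y), u ≠ v}. -/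
theorem stmt_4 (X : Type*) [Fintype X] [DecidableEq X]
    (hn : 3 ≤ Fintype.card X)
    (ρ : X → X → ℝ)
    (hsymm : ∀ x y : X, ρ x y = ρ y x)
    (hpos : ∀ x y : X, x ≠ y → 0 < ρ x y)
    (hzero : ∀ x : X, ρ x x = 0)
    (htri : ∀ x y z : X, ρ x z ≤ ρ x y + ρ y z)
    (δ : X → X → ℝ)
    (hδ : ∀ x y : X, δ x y =
      if y = x then ((Fintype.card X : ℝ) - 1) / (Fintype.card X : ℝ)
      else -1 / (Fintype.card X : ℝ))
    (e : X → X → (X → ℝ))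
    (he : ∀ x y : X, e x y = (ρ x y)⁻¹ • (δ x - δ y)) :
    ∀ x y : X, x ≠ y →
      e x y ∉ intrinsicInterior ℝ
        (convexHull ℝ {v : X → ℝ | ∃ u w : X, u ≠ w ∧ (u, w) ≠ (x, y) ∧ v = e u w}) := by
  intro x y hxy hmem
  set n : ℝ := (Fintype.card X : ℝ) with hn'
  -- the linear functional pairing with g z = ρ z y
  set g : X → ℝ := fun z => ρ z y with hg
  set f : (X → ℝ) → ℝ := fun v => ∑ z, v z * g z with hf
  have hflin : IsLinearMap ℝ f := by
    constructor
    · intro v w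
      simp [hf, add_mul, Finset.sum_add_distrib]
    · intro c v
      simp [hf, Finset.mul_sum, mul_assoc]
  -- f on delta functions
  have hfδ : ∀ u : X, f (δ u) = g u - (∑ z, g z) / n := by
    intro u
    have hn0 : n ≠ 0 := by
      have : (0:ℝ) < n := by
        have : 0 < Fintype.card X := by omega
        rw [hn']
        exact_mod_cast this
      exact this.ne'
    have : ∀ z : X, δ u z * g z = (if z = u then g z else 0) - g z / n := by
      intro z
      rw [hδ]
      split_ifs with h
      · field_simp
      · ring
    simp only [hf]
    rw [Finset.sum_congr rfl (fun z _ => this z), Finset.sum_sub_distrib,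
      Finset.sum_ite_eq' Finset.univ u g]
    simp [Finset.sum_div]
  have hfe : ∀ u w : X, f (e u w) = (ρ u w)⁻¹ * (ρ u y - ρ w y) := by
    intro u w
    rw [he, hflin.map_smul, hflin.map_sub (δ u) (δ w), hfδ, hfδ, smul_eq_mul]
    ring
  -- the set of other elementary molecules
  set S : Set (X → ℝ) := {v : X → ℝ | ∃ u w : X, u ≠ w ∧ (u, w) ≠ (x, y) ∧ v = e u w} with hS
  -- f ≤ 1 on S, hence on the hull
  have hSle : ∀ v ∈ S, f v ≤ 1 := by
    rintro v ⟨u, w, huw, -, rfl⟩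
    rw [hfe]
    rw [inv_mul_le_iff₀ (hpos u w huw), mul_one]
    have := htri u w y
    linarith
  have hhull : ∀ v ∈ convexHull ℝ S, f v ≤ 1 :=
    fun v hv => convexHull_min hSle (convex_halfSpace_le hflin 1) hv
  -- values at the two key points
  have hfa : f (e x y) = 1 := by
    rw [hfe, hzero, sub_zero, inv_mul_cancel₀ (hpos x y hxy).ne']
  have hfz : f (e y x) = -1 := by
    rw [hfe, hzero, zero_sub, hsymm y x]
    field_simp [(hpos x y hxy).ne']
  set a : X → ℝ := e x y with ha
  set z : X → ℝ := e y x with hz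
  have hzS : z ∈ S := ⟨y, x, hxy.symm, by simp [Prod.ext_iff, hxy.symm], rfl⟩
  have hzhull : z ∈ convexHull ℝ S := subset_convexHull ℝ S hzS
  -- unpack the intrinsic interior membership
  rw [mem_intrinsicInterior] at hmem
  obtain ⟨y₀, hy₀, hy₀a⟩ := hmem
  rw [mem_interior_iff_mem_nhds, Metric.mem_nhds_iff] at hy₀
  obtain ⟨ε, hε, hball⟩ := hy₀
  have haspan : a ∈ affineSpan ℝ (convexHull ℝ S) := by
    rw [← hy₀a]; exact y₀.2
  have hzspan : z ∈ affineSpan ℝ (convexHull ℝ S) := subset_affineSpan ℝ _ hzhull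
  -- pick a small step beyond a
  set t : ℝ := ε / (2 * (‖a - z‖ + 1)) with ht
  have hnormpos : (0:ℝ) < ‖a - z‖ + 1 := by positivity
  have htpos : 0 < t := by positivity
  set w : X → ℝ := t • (a - z) + a with hw
  have hwspan : w ∈ affineSpan ℝ (convexHull ℝ S) := by
    have := AffineSubspace.smul_vsub_vadd_mem (affineSpan ℝ (convexHull ℝ S)) t
      haspan hzspan haspan
    simpa [vsub_eq_sub, vadd_eq_add] using this
  have hdist : dist (⟨w, hwspan⟩ : affineSpan ℝ (convexHull ℝ S)) y₀ < ε := by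
    rw [Subtype.dist_eq, hy₀a]
    have : dist w a = t * ‖a - z‖ := by
      rw [dist_eq_norm, hw, add_sub_cancel_right, norm_smul, Real.norm_eq_abs,
        abs_of_pos htpos]
    rw [this, ht]
    rw [div_mul_eq_mul_div, div_lt_iff₀ (by positivity)]
    nlinarith [norm_nonneg (a - z)]
  have hwmem : w ∈ convexHull ℝ S := hball hdist
  have hfw : f w = 1 + 2 * t := by
    rw [hw, hflin.map_add, hflin.map_smul, hflin.map_sub a z, ha, hz, hfa, hfz, smul_eq_mul]
    ring
  have := hhull w hwmem
  rw [hfw] at this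
  linarith
end

section
/- Conversely, if ρ is a symmetric positive function on pairs of distinct points of a finite set X (with ρ(x,x)=0) such that no point e_{x,y} lies in the interior (relative to V₀) of the convex hull of the remaining points e_{u,v}, then ρ satisfies the triangle inequality, i.e., ρ is a metric on X. -/
/-!
If `ρ x z > ρ x y + ρ y z`, then `x, y, z` are distinct and
`e x z = (ρ x y / ρ x z) • e x y + (ρ y z / ρ x z) • e y z` with coefficients of sum `< 1`.
Since `e` is antisymmetric, the sum of all `e u w` over ordered pairs `u ≠ w` vanishes, so the
sum over the pairs other than `(x, z)` is `-e x z`. Mixing these two expressions gives `e x z`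
as a convex combination of all the other points with strictly positive weights, and such a point
lies in the relative interior of their convex hull.
-/

open Set Finset

section ConvexHull

variable {ι E : Type*} [Fintype ι] [AddCommGroup E] [Module ℝ E]

theorem sum_smul_mem_convexHull_range (v : ι → E) {w : ι → ℝ} (hw : ∀ i, 0 ≤ w i)
    (hw1 : ∑ i, w i = 1) :
    ∑ i, w i • v i ∈ convexHull ℝ (range v) :=
  (convex_convexHull ℝ _).sum_mem (fun i _ => hw i) hw1
    (fun i _ => subset_convexHull ℝ _ (mem_range_self i))

variable [TopologicalSpace E] [IsTopologicalAddGroup E] [ContinuousSMul ℝ E] [T2Space E]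

theorem sum_smul_mem_intrinsicInterior_convexHull (v : ι → E) {w : ι → ℝ} (hw : ∀ i, 0 < w i)
    (hw1 : ∑ i, w i = 1) :
    ∑ i, w i • v i ∈ intrinsicInterior ℝ (convexHull ℝ (range v)) := by
  set T := Fintype.linearCombination ℝ fun i => (v i, (1 : ℝ))
  have hT : ∀ μ, T μ = (∑ i, μ i • v i, ∑ i, μ i) := fun μ => by
    ext <;> simp [T, Fintype.linearCombination_apply, Prod.fst_sum, Prod.snd_sum]
  have hA : ∀ q ∈ affineSpan ℝ (convexHull ℝ (range v)), (q, (1 : ℝ)) ∈ LinearMap.range T := by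
    intro q hq
    rw [affineSpan_convexHull] at hq
    obtain ⟨μ, hμ1, rfl⟩ := eq_affineCombination_of_mem_affineSpan_of_fintype hq
    exact ⟨μ, by rw [hT, Finset.affineCombination_eq_linear_combination _ _ _ hμ1, hμ1]⟩
  -- Points `q` of the affine span near `∑ i, w i • v i` are hit by positive weights near `w`:
  -- `T` is open onto its range and `q ↦ (q, 1)` maps the affine span continuously into it.
  set A := affineSpan ℝ (convexHull ℝ (range v))
  let φ : A → LinearMap.range T := fun q => ⟨(q, 1), hA q q.2⟩
  have hφ : Continuous φ := (continuous_subtype_val.prodMk continuous_const).subtype_mk _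
  have hopen : IsOpen (T.rangeRestrict '' {μ | ∀ i, 0 < μ i}) := by
    refine LinearMap.isOpenMap_of_finiteDimensional _ T.surjective_rangeRestrict _ ?_
    simp only [Set.ofPred_forall]
    exact isOpen_iInter_of_finite fun i => isOpen_lt continuous_const (continuous_apply i)
  have hp := sum_smul_mem_convexHull_range v (fun i => (hw i).le) hw1
  refine mem_intrinsicInterior.2 ⟨⟨_, subset_affineSpan ℝ _ hp⟩, ?_, rfl⟩
  refine mem_interior.2 ⟨φ ⁻¹' (T.rangeRestrict '' {μ | ∀ i, 0 < μ i}), ?_, hopen.preimage hφ,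
    ⟨w, hw, Subtype.ext (by simp [φ, hT, hw1])⟩⟩
  rintro q ⟨μ, hμ, hμq⟩
  obtain ⟨hμv, hμ1⟩ := Prod.ext_iff.1 (congrArg Subtype.val hμq)
  simp only [LinearMap.codRestrict_apply, hT, φ] at hμv hμ1
  simpa [← hμv] using sum_smul_mem_convexHull_range v (fun i => (hμ i).le) hμ1

theorem mem_intrinsicInterior_convexHull_of_sum_eq_neg {v : ι → E} {p : E}
    (hsum : ∑ i, v i = -p) {i j : ι} {s t : ℝ} (hs : 0 < s) (ht : 0 < t) (hst : s + t < 1)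
    (hp : p = s • v i + t • v j) :
    p ∈ intrinsicInterior ℝ (convexHull ℝ (range v)) := by
  classical
  -- `p = a • (-∑ v) + (1 + a) • (s • v i + t • v j)`, with `a` chosen to make the weights sum to 1
  set a := (1 - (s + t)) / (Fintype.card ι + (s + t))
  have ha : 0 < a := div_pos (by linarith) (by positivity)
  have ha' : a * (Fintype.card ι + (s + t)) = 1 - (s + t) := div_mul_cancel₀ _ (by positivity)
  let w : ι → ℝ := fun k =>
    a + (if k = i then (1 + a) * s else 0) + (if k = j then (1 + a) * t else 0)
  have hw : ∀ k, 0 < w k := fun k => by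
    have : 0 ≤ (if k = i then (1 + a) * s else 0) := by split_ifs <;> positivity
    have : 0 ≤ (if k = j then (1 + a) * t else 0) := by split_ifs <;> positivity
    simp only [w]; linarith
  have hw1 : ∑ k, w k = 1 := by
    simp only [w, sum_add_distrib, sum_const, card_univ, nsmul_eq_mul, sum_ite_eq', Finset.mem_univ,
      if_true]
    linear_combination ha'
  have hwp : ∑ k, w k • v k = p := by
    simp only [w, add_smul, ite_smul, zero_smul, sum_add_distrib, ← smul_sum, sum_ite_eq',
      Finset.mem_univ, if_true, hsum]
    rw [hp]
    module
  exact hwp ▸ sum_smul_mem_intrinsicInterior_convexHull v hw hw1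

end ConvexHull

theorem sum_erase_offDiag_eq_neg {X E : Type*} [Fintype X] [DecidableEq X] [AddCommGroup E]
    {e : X → X → E} (he : ∀ u w, e w u = -e u w) {x z : X} (hxz : x ≠ z) :
    ∑ p ∈ (univ : Finset X).offDiag.erase (x, z), e p.1 p.2 = -e x z := by
  have hsum : ∑ p ∈ (univ : Finset X).offDiag, e p.1 p.2 = 0 :=
    sum_involution (fun p _ => p.swap) (fun p _ => by simp [he p.1 p.2])
      (fun p hp _ h => (mem_offDiag.1 hp).2.2 (congrArg Prod.fst h).symm)
      (fun p hp => mem_offDiag.2 ⟨mem_univ _, mem_univ _, (mem_offDiag.1 hp).2.2.symm⟩)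
      (fun p _ => p.swap_swap)
  rw [sum_erase_eq_sub (by simpa using hxz), hsum, zero_sub]

theorem inv_smul_sub_eq_div_smul_add_div_smul {E : Type*} [AddCommGroup E] [Module ℝ E]
    {a b c : ℝ} (ha : a ≠ 0) (hb : b ≠ 0) (x y z : E) :
    c⁻¹ • (x - z) = (a / c) • (a⁻¹ • (x - y)) + (b / c) • (b⁻¹ • (y - z)) := by
  simp only [smul_smul, div_mul_eq_mul_div, mul_inv_cancel₀ ha, mul_inv_cancel₀ hb, one_div,
    ← smul_add, sub_add_sub_cancel]

theorem ne_and_ne_and_ne_of_add_lt {X : Type*} {ρ : X → X → ℝ} (hpos : ∀ x y : X, x ≠ y → 0 < ρ x y)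
    (hzero : ∀ x : X, ρ x x = 0) {x y z : X} (h : ρ x y + ρ y z < ρ x z) :
    x ≠ y ∧ y ≠ z ∧ x ≠ z := by
  have hnonneg : ∀ u w, 0 ≤ ρ u w := fun u w => by
    rcases eq_or_ne u w with rfl | huw
    exacts [(hzero u).ge, (hpos u w huw).le]
  refine ⟨?_, ?_, ?_⟩ <;> rintro rfl
  · linarith [hzero x]
  · linarith [hzero y]
  · linarith [hzero x, hnonneg x y, hnonneg y x]

theorem stmt_5_general (X : Type*) [Fintype X] [DecidableEq X]
    (ρ : X → X → ℝ)
    (hsymm : ∀ x y : X, ρ x y = ρ y x)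
    (hpos : ∀ x y : X, x ≠ y → 0 < ρ x y)
    (hzero : ∀ x : X, ρ x x = 0)
    (δ : X → X → ℝ)
    (e : X → X → (X → ℝ))
    (he : ∀ x y : X, e x y = (ρ x y)⁻¹ • (δ x - δ y))
    (hext : ∀ x y : X, x ≠ y →
      e x y ∉ intrinsicInterior ℝ
        (convexHull ℝ {v : X → ℝ | ∃ u w : X, u ≠ w ∧ (u, w) ≠ (x, y) ∧ v = e u w})) :
    ∀ x y z : X, ρ x z ≤ ρ x y + ρ y z := by
  intro x y z
  by_contra! hlt
  obtain ⟨hxy, hyz, hxz⟩ := ne_and_ne_and_ne_of_add_lt hpos hzero hlt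
  set P := (univ : Finset X).offDiag.erase (x, z)
  have hrange : range (fun p : P => e p.1.1 p.1.2) =
      {v | ∃ u w : X, u ≠ w ∧ (u, w) ≠ (x, z) ∧ v = e u w} := by
    ext v
    simp [P, eq_comm, and_assoc, and_left_comm]
  have hsum : ∑ p : P, e p.1.1 p.1.2 = -e x z := by
    rw [sum_coe_sort P fun p => e p.1 p.2]
    exact sum_erase_offDiag_eq_neg (fun u w => by simp only [he, hsymm w u]; module) hxz
  have hmem : ∀ u w, u ≠ w → (u, w) ≠ (x, z) → (u, w) ∈ P := fun u w huw h => by simp [P, huw, h]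
  refine hext x z hxz (hrange ▸ mem_intrinsicInterior_convexHull_of_sum_eq_neg hsum
    (i := ⟨(x, y), hmem x y hxy (by simp [hyz])⟩) (j := ⟨(y, z), hmem y z hyz (by simp [hxy.symm])⟩)
    (div_pos (hpos x y hxy) (hpos x z hxz)) (div_pos (hpos y z hyz) (hpos x z hxz)) ?_ ?_)
  · rwa [← add_div, div_lt_one (hpos x z hxz)]
  · simp only [he]
    exact inv_smul_sub_eq_div_smul_add_div_smul (hpos x y hxy).ne' (hpos y z hyz).ne' _ _ _

theorem stmt_5 (X : Type*) [Fintype X] [DecidableEq X]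
    (hn : 3 ≤ Fintype.card X)
    (ρ : X → X → ℝ)
    (hsymm : ∀ x y : X, ρ x y = ρ y x)
    (hpos : ∀ x y : X, x ≠ y → 0 < ρ x y)
    (hzero : ∀ x : X, ρ x x = 0)
    (δ : X → X → ℝ)
    (hδ : ∀ x y : X, δ x y =
      if y = x then ((Fintype.card X : ℝ) - 1) / (Fintype.card X : ℝ)
      else -1 / (Fintype.card X : ℝ))
    (e : X → X → (X → ℝ))
    (he : ∀ x y : X, e x y = (ρ x y)⁻¹ • (δ x - δ y))
    (hext : ∀ x y : X, x ≠ y →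
      e x y ∉ intrinsicInterior ℝ
        (convexHull ℝ {v : X → ℝ | ∃ u w : X, u ≠ w ∧ (u, w) ≠ (x, y) ∧ v = e u w})) :
    ∀ x y z : X, ρ x z ≤ ρ x y + ρ y z :=
  stmt_5_general X ρ hsymm hpos hzero δ e he hext
end

section
/- Maximality of the Kantorovich–Rubinstein norm: if ‖·‖ is any norm on V₀ satisfying ‖δ_x - δ_y‖ = ρ(x,y) for all distinct x, y ∈ X, then ‖v‖ ≤ ‖v‖_ρ for all v ∈ V₀, where ‖·‖_ρ is the gauge of the fundamental polytope R_{X,ρ}. -/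
open Pointwise

theorem stmt_8 (X : Type*) [Fintype X] [DecidableEq X]
    (hn : 2 ≤ Fintype.card X)
    (ρ : X → X → ℝ)
    (hsymm : ∀ x y : X, ρ x y = ρ y x)
    (hpos : ∀ x y : X, x ≠ y → 0 < ρ x y)
    (hzero : ∀ x : X, ρ x x = 0)
    (htri : ∀ x y z : X, ρ x z ≤ ρ x y + ρ y z)
    (δ : X → X → ℝ)
    (hδ : ∀ x y : X, δ x y =
      if y = x then ((Fintype.card X : ℝ) - 1) / (Fintype.card X : ℝ)
      else -1 / (Fintype.card X : ℝ))
    (R : Set (X → ℝ))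
    (hR : R = convexHull ℝ {v : X → ℝ | ∃ x y : X, x ≠ y ∧ v = (ρ x y)⁻¹ • (δ x - δ y)})
    (V₀ : Set (X → ℝ)) (hV₀ : V₀ = {v : X → ℝ | ∑ x : X, v x = 0})
    -- ‖·‖ is a norm on V₀:
    (N : (X → ℝ) → ℝ)
    (hNpos : ∀ v ∈ V₀, v ≠ 0 → 0 < N v)
    (hNzero : N 0 = 0)
    (hNsmul : ∀ v ∈ V₀, ∀ c : ℝ, N (c • v) = |c| * N v)
    (hNadd : ∀ v ∈ V₀, ∀ w ∈ V₀, N (v + w) ≤ N v + N w)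
    -- the norm extends the metric:
    (hNext : ∀ x y : X, x ≠ y → N (δ x - δ y) = ρ x y) :
    ∀ v ∈ V₀, N v ≤ gauge R v := by
  classical
  have hn0 : (Fintype.card X : ℝ) ≠ 0 := by
    have : 0 < Fintype.card X := by omega
    positivity
  set S : Set (X → ℝ) := {v : X → ℝ | ∃ x y : X, x ≠ y ∧ v = (ρ x y)⁻¹ • (δ x - δ y)} with hS
  have hδ' : ∀ x y : X, δ x y = (if y = x then (1 : ℝ) else 0) - 1 / (Fintype.card X : ℝ) := by
    intro x y
    rw [hδ]
    split
    · field_simp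
    · ring
  -- V₀ closure
  have hV₀smul : ∀ (c : ℝ), ∀ w ∈ V₀, c • w ∈ V₀ := by
    intro c w hw
    rw [hV₀] at *
    simp only [Set.mem_setOf_eq, Pi.smul_apply, smul_eq_mul, ← Finset.mul_sum] at *
    rw [hw, mul_zero]
  have hV₀add : ∀ v ∈ V₀, ∀ w ∈ V₀, v + w ∈ V₀ := by
    intro v hv w hw
    rw [hV₀] at *
    simp only [Set.mem_setOf_eq, Pi.add_apply, Finset.sum_add_distrib] at *
    rw [hv, hw, add_zero]
  have hgenV₀ : ∀ a b : X, (δ a - δ b) ∈ V₀ := by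
    intro a b
    rw [hV₀]
    simp only [Set.mem_setOf_eq, Pi.sub_apply]
    have : ∀ z : X, ∑ x : X, δ z x = 0 := by
      intro z
      simp only [hδ']
      rw [Finset.sum_sub_distrib, Finset.sum_ite_eq' Finset.univ z (fun _ => (1:ℝ))]
      simp [hn0]
    rw [Finset.sum_sub_distrib, this a, this b, sub_zero]
  -- every element of R lies in V₀ with N ≤ 1
  have hRsub : R ⊆ {w | w ∈ V₀ ∧ N w ≤ 1} := by
    rw [hR]
    apply convexHull_min
    · rintro w ⟨a, b, hab, rfl⟩
      refine ⟨hV₀smul _ _ (hgenV₀ a b), ?_⟩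
      rw [hNsmul _ (hgenV₀ a b), hNext a b hab,
        abs_of_pos (inv_pos.2 (hpos a b hab)),
        inv_mul_cancel₀ (ne_of_gt (hpos a b hab))]
    · intro v hv w hw a b ha hb hab
      refine ⟨hV₀add _ (hV₀smul a v hv.1) _ (hV₀smul b w hw.1), ?_⟩
      calc N (a • v + b • w) ≤ N (a • v) + N (b • w) :=
            hNadd _ (hV₀smul a v hv.1) _ (hV₀smul b w hw.1)
        _ = |a| * N v + |b| * N w := by
            rw [hNsmul _ hv.1, hNsmul _ hw.1]
        _ ≤ a * 1 + b * 1 := by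
            rw [abs_of_nonneg ha, abs_of_nonneg hb]
            exact add_le_add (mul_le_mul_of_nonneg_left hv.2 ha)
              (mul_le_mul_of_nonneg_left hw.2 hb)
        _ = 1 := by rw [mul_one, mul_one, hab]
  intro v hv
  by_cases hv0 : v = 0
  · subst hv0
    rw [hNzero]
    exact gauge_nonneg _
  -- decomposition of v
  have hnt : Nontrivial X := Fintype.one_lt_card_iff_nontrivial.mp (by omega)
  obtain ⟨x₀⟩ := (inferInstance : Nonempty X)
  set c : X → ℝ := fun x => |v x| * ρ x x₀ with hc
  obtain ⟨a0, b0, hab0⟩ := exists_pair_ne X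
  set g : X → ℝ := (ρ a0 b0)⁻¹ • (δ a0 - δ b0) with hg
  have hgS : g ∈ S := ⟨a0, b0, hab0, rfl⟩
  set u : X → (X → ℝ) := fun x =>
    if x = x₀ then g
    else if 0 ≤ v x then (ρ x x₀)⁻¹ • (δ x - δ x₀)
    else (ρ x₀ x)⁻¹ • (δ x₀ - δ x) with hu
  have huS : ∀ x : X, u x ∈ S := by
    intro x
    by_cases hx : x = x₀
    · simpa [hu, hx] using hgS
    · by_cases hvx : 0 ≤ v x
      · exact ⟨x, x₀, hx, by simp [hu, hx, hvx]⟩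
      · exact ⟨x₀, x, Ne.symm hx, by simp [hu, hx, hvx]⟩
  have hcu : ∀ x : X, c x • u x = v x • (δ x - δ x₀) := by
    intro x
    by_cases hx : x = x₀
    · subst hx
      simp [hc, hzero]
    · have hρ : 0 < ρ x x₀ := hpos x x₀ hx
      have hcx : c x = |v x| * ρ x x₀ := rfl
      by_cases hvx : 0 ≤ v x
      · rw [show u x = (ρ x x₀)⁻¹ • (δ x - δ x₀) by simp [hu, hx, hvx],
          hcx, smul_smul, abs_of_nonneg hvx,
          mul_assoc, mul_inv_cancel₀ (ne_of_gt hρ), mul_one]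
      · rw [show u x = (ρ x₀ x)⁻¹ • (δ x₀ - δ x) by simp [hu, hx, hvx],
          hcx, hsymm x₀ x, smul_smul, abs_of_neg (lt_of_not_ge hvx),
          mul_assoc, mul_inv_cancel₀ (ne_of_gt hρ), mul_one,
          neg_smul, ← smul_neg, neg_sub]
  have hsumv : ∑ x : X, c x • u x = v := by
    rw [Finset.sum_congr rfl (fun x _ => hcu x)]
    funext y
    rw [hV₀] at hv
    have hvs : ∑ x : X, v x = 0 := hv
    simp only [Finset.sum_apply, Pi.smul_apply, Pi.sub_apply, smul_eq_mul, hδ']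
    have : ∀ x : X, v x * ((if y = x then (1:ℝ) else 0) - 1 / (Fintype.card X : ℝ)
        - ((if y = x₀ then (1:ℝ) else 0) - 1 / (Fintype.card X : ℝ)))
        = v x * (if y = x then (1:ℝ) else 0) - v x * (if y = x₀ then (1:ℝ) else 0) := by
      intro x; ring
    rw [Finset.sum_congr rfl (fun x _ => this x), Finset.sum_sub_distrib]
    rw [← Finset.sum_mul, hvs, zero_mul, sub_zero]
    simp [Finset.sum_ite_eq Finset.univ y (fun x => v x)]
  set s : ℝ := ∑ x : X, c x with hs
  have hc0 : ∀ x : X, 0 ≤ c x := by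
    intro x
    rcases eq_or_ne x x₀ with h | h
    · subst h; simp [hc, hzero]
    · exact mul_nonneg (abs_nonneg _) (le_of_lt (hpos x x₀ h))
  have hs_pos : 0 < s := by
    rcases (Finset.sum_nonneg (fun x _ => hc0 x)).lt_or_eq with h | h
    · exact h
    · exfalso
      apply hv0
      have hall : ∀ x : X, c x = 0 := by
        intro x
        have := (Finset.sum_eq_zero_iff_of_nonneg (fun x _ => hc0 x)).mp h.symm x (Finset.mem_univ x)
        exact this
      have hvx : ∀ x : X, v x = 0 := by
        intro x
        rcases eq_or_ne x x₀ with hx | hx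
        · rw [hV₀] at hv
          have hvs : ∑ z : X, v z = 0 := hv
          subst hx
          have hoth : ∀ z : X, z ≠ x → v z = 0 := by
            intro z hz
            have hcz : |v z| * ρ z x = 0 := hall z
            rcases mul_eq_zero.mp hcz with h' | h'
            · exact abs_eq_zero.mp h'
            · exact absurd h' (ne_of_gt (hpos z x hz))
          have : ∑ z : X, v z = v x := by
            rw [Finset.sum_eq_single x (fun z _ hz => hoth z hz) (by simp)]
          rw [this] at hvs
          exact hvs
        · have hcx : |v x| * ρ x x₀ = 0 := hall x
          rcases mul_eq_zero.mp hcx with h' | h'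
          · exact abs_eq_zero.mp h'
          · exact absurd h' (ne_of_gt (hpos x x₀ hx))
      funext x; exact hvx x
  have hmem : v ∈ s • R := by
    have : Finset.univ.centerMass c u ∈ convexHull ℝ S :=
      Finset.centerMass_mem_convexHull Finset.univ (fun x _ => hc0 x) hs_pos (fun x _ => huS x)
    rw [Finset.centerMass, ← hs, hsumv] at this
    exact Set.mem_smul_set.2 ⟨s⁻¹ • v, by rw [hR]; exact this,
      smul_inv_smul₀ (ne_of_gt hs_pos) v⟩
  show N v ≤ sInf {r : ℝ | 0 < r ∧ v ∈ r • R}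
  have hne : Set.Nonempty {r : ℝ | 0 < r ∧ v ∈ r • R} := ⟨s, hs_pos, hmem⟩
  refine le_csInf hne ?_
  rintro r ⟨hr, hmr⟩
  obtain ⟨w, hw, rfl⟩ := Set.mem_smul_set.1 hmr
  obtain ⟨hwV, hwN⟩ := hRsub hw
  rw [hNsmul _ hwV, abs_of_pos hr]
  calc r * N w ≤ r * 1 := by gcongr
    _ = r := mul_one r
end

section
/- Kantorovich duality in the finite case: for a finite metric space (X, ρ) and v ∈ V₀ with positive part u = v⁺ and negative part w = v⁻ (so ∑u(x) = ∑w(x)), the optimal transport cost min_{ψ} ∑_{x,y} ρ(x,y)ψ(x,y) over all nonnegative matrices ψ with row sums u and column sums w equals max{∑_x f(x)v(x) : f : X → ℝ, |f(x) - f(y)| ≤ ρ(x,y) for all x,y}. -/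
/-!
Weak duality follows from the identity `∑ f v = ∑ (f x - f y) ψ x y`, valid for every plan `ψ`.
For the converse, let the transshipment cost of a zero-sum `u` be the least cost of a nonnegative
flow with net outflow `u`. Adding and scaling flows shows it is sublinear, so by Hahn–Banach some
linear `g` lies below it and agrees with it at `v`; then `f x := g δₓ` is 1-Lipschitz, because
`δₓ - δ_y` is the net outflow of one unit sent along `x → y`.
It remains to see that the transshipment cost of `v` is at least the optimal transport cost.
By the triangle inequality, flow along `z → x → y` can be rerouted directly along `z → y` at no
extra cost. Among the flows no more expensive than a given one, a flow of least total mass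
therefore has no vertex with both inflow and outflow, and such a flow is a transport plan.
-/

open Finset
open scoped Pointwise

section Sublinear

variable {E : Type*} [AddCommGroup E] [Module ℝ E]

theorem exists_linearMap_le_sublinear_eq (N : E → ℝ)
    (N_hom : ∀ c : ℝ, 0 < c → ∀ x, N (c • x) = c * N x) (N_add : ∀ x y, N (x + y) ≤ N x + N y)
    (v : E) : ∃ g : E →ₗ[ℝ] ℝ, (∀ x, g x ≤ N x) ∧ g v = N v := by
  have hN0 : N 0 = 0 := by
    have := N_hom 2 two_pos 0
    rw [smul_zero] at this
    linarith
  let f₀ : E →ₗ.[ℝ] ℝ := LinearPMap.mkSpanSingleton' v (N v) fun (c : ℝ) hc => by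
    rcases eq_or_ne c 0 with rfl | hc0
    · simp
    · simp [(smul_eq_zero_iff_right hc0).1 hc, hN0]
  have hf₀ : ∀ x : f₀.domain, f₀ x ≤ N x := by
    rintro ⟨_, hx⟩
    obtain ⟨c, rfl⟩ := Submodule.mem_span_singleton.1 hx
    rw [LinearPMap.mkSpanSingleton'_apply, smul_eq_mul, RingHom.id_apply, Submodule.coe_mk]
    rcases lt_trichotomy c 0 with hc | rfl | hc
    · have := N_add (c • v) ((-c) • v)
      rw [← add_smul, add_neg_cancel, zero_smul, hN0, N_hom _ (neg_pos.2 hc)] at this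
      linarith
    · simp [hN0]
    · rw [N_hom c hc]
  obtain ⟨g, hgf, hgN⟩ := exists_extension_of_le_sublinear f₀ N N_hom N_add hf₀
  refine ⟨g, hgN, ?_⟩
  rw [hgf ⟨v, Submodule.mem_span_singleton_self v⟩]
  exact LinearPMap.mkSpanSingleton'_apply_self _ _ _ _

end Sublinear

theorem nonneg_of_symm_of_triangle {X : Type*} {ρ : X → X → ℝ} (hsymm : ∀ x y, ρ x y = ρ y x)
    (htri : ∀ x y z, ρ x z ≤ ρ x y + ρ y z) : 0 ≤ ρ := fun x y => by
  show 0 ≤ ρ x y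
  linarith [htri x x x, htri x y x, hsymm x y]

section Transport

variable {X : Type*} [Fintype X]

def netFlow : (X → X → ℝ) →ₗ[ℝ] X → ℝ where
  toFun φ x := ∑ y, φ x y - ∑ y, φ y x
  map_add' φ χ := by ext x; simp only [Pi.add_apply, sum_add_distrib]; ring
  map_smul' t φ := by
    ext x; simp only [Pi.smul_apply, smul_eq_mul, ← mul_sum, RingHom.id_apply]; ring

def transportCost (ρ : X → X → ℝ) : (X → X → ℝ) →ₗ[ℝ] ℝ where
  toFun φ := ∑ x, ∑ y, ρ x y * φ x y
  map_add' φ χ := by simp only [Pi.add_apply, mul_add, sum_add_distrib]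
  map_smul' t φ := by
    simp only [Pi.smul_apply, smul_eq_mul, mul_sum, RingHom.id_apply, mul_left_comm]

theorem netFlow_apply (φ : X → X → ℝ) (x : X) : netFlow φ x = ∑ y, φ x y - ∑ y, φ y x := rfl

theorem transportCost_apply (ρ φ : X → X → ℝ) :
    transportCost ρ φ = ∑ x, ∑ y, ρ x y * φ x y := rfl

theorem sum_mul_netFlow (f : X → ℝ) (φ : X → X → ℝ) :
    ∑ x, f x * netFlow φ x = ∑ x, ∑ y, (f x - f y) * φ x y := by
  simp only [netFlow_apply, mul_sub, sub_mul, sum_sub_distrib, mul_sum]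
  rw [sum_comm (f := fun x y => f x * φ y x)]

theorem transportCost_nonneg {ρ φ : X → X → ℝ} (hρ : 0 ≤ ρ) (hφ : 0 ≤ φ) :
    0 ≤ transportCost ρ φ :=
  sum_nonneg fun x _ => sum_nonneg fun y _ => mul_nonneg (hρ x y) (hφ x y)

theorem le_transportCost_one {φ : X → X → ℝ} (hφ : 0 ≤ φ) (x y : X) :
    φ x y ≤ transportCost 1 φ := by
  simp only [transportCost_apply, Pi.one_apply, one_mul]
  calc φ x y ≤ ∑ y', φ x y' := single_le_sum (fun y' _ => hφ x y') (mem_univ y)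
    _ ≤ ∑ x', ∑ y', φ x' y' :=
      single_le_sum (f := fun x' => ∑ y', φ x' y') (fun x' _ => sum_nonneg fun y' _ => hφ x' y')
        (mem_univ x)

theorem isCompact_of_forall_transportCost_one_le {S : Set (X → X → ℝ)} (hS : IsClosed S) {M : ℝ}
    (hM : ∀ φ ∈ S, 0 ≤ φ ∧ transportCost 1 φ ≤ M) : IsCompact S := by
  refine (isCompact_univ_pi fun _ => isCompact_univ_pi fun _ => isCompact_Icc (a := 0) (b := M))
    |>.of_isClosed_subset hS fun φ hφ => ?_
  simp only [Set.mem_pi, Set.mem_univ, Set.mem_Icc, forall_const]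
  exact fun x y => ⟨(hM φ hφ).1 x y, (le_transportCost_one (hM φ hφ).1 x y).trans (hM φ hφ).2⟩

def IsTransportPlan (v : X → ℝ) (ψ : X → X → ℝ) : Prop :=
  0 ≤ ψ ∧ (∀ x, ∑ y, ψ x y = max (v x) 0) ∧ ∀ y, ∑ x, ψ x y = max (-v y) 0

variable {v : X → ℝ} {ψ : X → X → ℝ}

theorem sum_netFlow (φ : X → X → ℝ) : ∑ x, netFlow φ x = 0 := by
  simp only [netFlow_apply, sum_sub_distrib]
  rw [sum_comm, sub_self]

theorem IsTransportPlan.netFlow_eq (hψ : IsTransportPlan v ψ) : netFlow ψ = v := by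
  ext x
  rw [netFlow_apply, hψ.2.1, hψ.2.2]
  exact max_zero_sub_max_neg_zero_eq_self (v x)

theorem IsTransportPlan.transportCost_one (hψ : IsTransportPlan v ψ) :
    transportCost 1 ψ = ∑ x, max (v x) 0 := by
  simp only [transportCost_apply, Pi.one_apply, one_mul, hψ.2.1]

theorem IsTransportPlan.sum_mul_le_transportCost (hψ : IsTransportPlan v ψ) {ρ : X → X → ℝ}
    {f : X → ℝ} (hf : ∀ x y, f x - f y ≤ ρ x y) : ∑ x, f x * v x ≤ transportCost ρ ψ := by
  rw [← hψ.netFlow_eq, sum_mul_netFlow]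
  exact sum_le_sum fun x _ => sum_le_sum fun y _ => mul_le_mul_of_nonneg_right (hf x y) (hψ.1 x y)

theorem isTransportPlan_netFlow {φ : X → X → ℝ} (hφ : 0 ≤ φ)
    (h : ∀ x, ∑ y, φ x y = 0 ∨ ∑ y, φ y x = 0) : IsTransportPlan (netFlow φ) φ := by
  refine ⟨hφ, fun x => ?_, fun x => ?_⟩ <;>
  · have hout : 0 ≤ ∑ y, φ x y := sum_nonneg fun y _ => hφ x y
    have hin : 0 ≤ ∑ y, φ y x := sum_nonneg fun y _ => hφ y x
    rcases h x with h | h <;> simp [netFlow_apply, h, hout, hin]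

theorem exists_isTransportPlan (hv : ∑ x, v x = 0) : ∃ ψ, IsTransportPlan v ψ := by
  set S := ∑ x, max (v x) 0
  have hS : ∑ x, max (-v x) 0 = S := by
    have := sum_congr rfl fun x (_ : x ∈ univ) => max_zero_sub_max_neg_zero_eq_self (v x)
    rw [sum_sub_distrib, hv] at this
    linarith
  rcases eq_or_ne S 0 with h | h
  · have hpos : ∀ x, max (v x) 0 = 0 :=
      fun x => (sum_eq_zero_iff_of_nonneg fun x _ => le_max_right (v x) 0).1 h x (mem_univ x)
    have hneg : ∀ x, max (-v x) 0 = 0 :=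
      fun x => (sum_eq_zero_iff_of_nonneg fun x _ => le_max_right (-v x) 0).1 (hS.trans h) x
        (mem_univ x)
    exact ⟨0, le_rfl, by simp [hpos], by simp [hneg]⟩
  · refine ⟨fun x y => max (v x) 0 * max (-v y) 0 / S, fun x y => by positivity,
      fun x => ?_, fun y => ?_⟩
    · rw [← sum_div, ← mul_sum, hS, mul_div_cancel_right₀ _ h]
    · rw [← sum_div, ← sum_mul, mul_div_cancel_left₀ _ h]

theorem isClosed_setOf_isTransportPlan (v : X → ℝ) : IsClosed {ψ | IsTransportPlan v ψ} := by
  simp only [IsTransportPlan, Set.ofPred_and, Set.ofPred_forall]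
  refine (isClosed_le continuous_const continuous_id).inter
    ((isClosed_iInter fun x => isClosed_eq ?_ continuous_const).inter
      (isClosed_iInter fun y => isClosed_eq ?_ continuous_const)) <;> fun_prop

theorem exists_isMinOn_transportCost (ρ : X → X → ℝ) (hv : ∑ x, v x = 0) :
    ∃ ψ, IsTransportPlan v ψ ∧ IsMinOn (transportCost ρ) {ψ | IsTransportPlan v ψ} ψ :=
  (isCompact_of_forall_transportCost_one_le (isClosed_setOf_isTransportPlan v)
    fun _ hψ => ⟨hψ.1, hψ.transportCost_one.le⟩).exists_isMinOn (exists_isTransportPlan hv)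
    (LinearMap.continuous_of_finiteDimensional _).continuousOn

def flowCosts (ρ : X → X → ℝ) (w : X → ℝ) : Set ℝ :=
  transportCost ρ '' {φ | 0 ≤ φ ∧ netFlow φ = w}

theorem flowCosts_nonempty (ρ : X → X → ℝ) {w : X → ℝ} (hw : ∑ x, w x = 0) :
    (flowCosts ρ w).Nonempty := by
  obtain ⟨ψ, hψ⟩ := exists_isTransportPlan hw
  exact ⟨_, ψ, ⟨hψ.1, hψ.netFlow_eq⟩, rfl⟩

theorem bddBelow_flowCosts {ρ : X → X → ℝ} (hρ : 0 ≤ ρ) (w : X → ℝ) :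
    BddBelow (flowCosts ρ w) :=
  ⟨0, by rintro _ ⟨φ, ⟨hφ, -⟩, rfl⟩; exact transportCost_nonneg hρ hφ⟩

theorem flowCosts_smul (ρ : X → X → ℝ) (w : X → ℝ) {t : ℝ} (ht : 0 < t) :
    flowCosts ρ (t • w) = t • flowCosts ρ w := by
  ext c
  simp only [flowCosts, Set.mem_smul_set, Set.mem_image, Set.mem_ofPred_eq]
  constructor
  · rintro ⟨φ, ⟨hφ, hnet⟩, rfl⟩
    refine ⟨_, ⟨t⁻¹ • φ, ⟨smul_nonneg (inv_nonneg.2 ht.le) hφ, ?_⟩, rfl⟩, ?_⟩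
    · rw [map_smul, hnet, inv_smul_smul₀ ht.ne']
    · rw [← map_smul, smul_inv_smul₀ ht.ne']
  · rintro ⟨_, ⟨φ, ⟨hφ, rfl⟩, rfl⟩, rfl⟩
    exact ⟨t • φ, ⟨smul_nonneg ht.le hφ, map_smul _ _ _⟩, map_smul _ _ _⟩

theorem add_flowCosts_subset (ρ : X → X → ℝ) (w w' : X → ℝ) :
    flowCosts ρ w + flowCosts ρ w' ⊆ flowCosts ρ (w + w') := by
  rintro _ ⟨_, ⟨φ, ⟨hφ, rfl⟩, rfl⟩, _, ⟨χ, ⟨hχ, rfl⟩, rfl⟩, rfl⟩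
  exact ⟨φ + χ, ⟨add_nonneg hφ hχ, map_add _ _ _⟩, map_add _ _ _⟩

-- Projection onto the zero-sum functions, so that `transshipmentCost` is meaningful on the whole
-- space, as Hahn–Banach requires.
noncomputable def centered : (X → ℝ) →ₗ[ℝ] X → ℝ where
  toFun u x := u x - (∑ y, u y) / Fintype.card X
  map_add' u w := by ext x; simp only [Pi.add_apply, sum_add_distrib, add_div]; ring
  map_smul' t u := by
    ext x; simp only [Pi.smul_apply, smul_eq_mul, ← mul_sum, RingHom.id_apply, mul_div_assoc]; ring

theorem sum_centered (u : X → ℝ) : ∑ x, centered u x = 0 := by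
  rcases isEmpty_or_nonempty X with hX | hX
  · simp
  · simp only [centered, LinearMap.coe_mk, AddHom.coe_mk, sum_sub_distrib, sum_const, card_univ,
      nsmul_eq_mul]
    rw [mul_div_cancel₀ _ (Nat.cast_ne_zero.2 Fintype.card_ne_zero), sub_self]

theorem centered_of_sum_eq_zero {u : X → ℝ} (hu : ∑ x, u x = 0) : centered u = u := by
  ext x
  simp [centered, hu]

noncomputable def transshipmentCost (ρ : X → X → ℝ) (u : X → ℝ) : ℝ :=
  sInf (flowCosts ρ (centered u))

theorem transshipmentCost_smul (ρ : X → X → ℝ) {t : ℝ} (ht : 0 < t) (u : X → ℝ) :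
    transshipmentCost ρ (t • u) = t * transshipmentCost ρ u := by
  rw [transshipmentCost, map_smul, flowCosts_smul ρ _ ht, Real.sInf_smul_of_nonneg ht.le,
    smul_eq_mul, transshipmentCost]

theorem transshipmentCost_add_le {ρ : X → X → ℝ} (hρ : 0 ≤ ρ) (u w : X → ℝ) :
    transshipmentCost ρ (u + w) ≤ transshipmentCost ρ u + transshipmentCost ρ w := by
  have hne := fun u => flowCosts_nonempty ρ (sum_centered u)
  rw [transshipmentCost, transshipmentCost, transshipmentCost, map_add,
    ← csInf_add (hne u) (bddBelow_flowCosts hρ _) (hne w) (bddBelow_flowCosts hρ _)]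
  exact csInf_le_csInf (bddBelow_flowCosts hρ _) ((hne u).add (hne w))
    (add_flowCosts_subset ρ _ _)

theorem transshipmentCost_netFlow_le {ρ : X → X → ℝ} (hρ : 0 ≤ ρ) {φ : X → X → ℝ} (hφ : 0 ≤ φ) :
    transshipmentCost ρ (netFlow φ) ≤ transportCost ρ φ :=
  csInf_le (bddBelow_flowCosts hρ _)
    ⟨φ, ⟨hφ, (centered_of_sum_eq_zero (sum_netFlow φ)).symm⟩, rfl⟩

end Transport

section Rerouting

variable {X : Type*} [DecidableEq X]

def unitFlow (a b : X) : X → X → ℝ := fun i j => if i = a ∧ j = b then 1 else 0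

theorem unitFlow_nonneg (a b : X) : 0 ≤ unitFlow a b := fun i j => by
  unfold unitFlow
  split_ifs <;> norm_num

variable [Fintype X]

theorem netFlow_unitFlow (a b : X) : netFlow (unitFlow a b) = Pi.single a 1 - Pi.single b 1 := by
  ext x
  simp [netFlow_apply, unitFlow, Pi.single_apply, ite_and]

theorem transportCost_unitFlow (ρ : X → X → ℝ) (a b : X) :
    transportCost ρ (unitFlow a b) = ρ a b := by
  simp [transportCost_apply, unitFlow, ite_and]

theorem LinearMap.apply_eq_sum_apply_single_mul (g : (X → ℝ) →ₗ[ℝ] ℝ) (v : X → ℝ) :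
    g v = ∑ x, g (Pi.single x 1) * v x := by
  conv_lhs => rw [← univ_sum_single v]
  simp only [map_sum, mul_comm (g _)]
  refine sum_congr rfl fun x _ => ?_
  rw [← smul_eq_mul, ← map_smul, ← Pi.single_smul', smul_eq_mul, mul_one]

theorem exists_shortcut {ρ : X → X → ℝ} (htri : ∀ x y z, ρ x z ≤ ρ x y + ρ y z)
    {φ : X → X → ℝ} (hφ : 0 ≤ φ) {x : X} (hout : ∑ y, φ x y ≠ 0) (hin : ∑ z, φ z x ≠ 0) :
    ∃ χ, 0 ≤ χ ∧ netFlow χ = netFlow φ ∧ transportCost ρ χ ≤ transportCost ρ φ ∧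
      transportCost 1 χ < transportCost 1 φ := by
  obtain ⟨y, -, hy⟩ := exists_ne_zero_of_sum_ne_zero hout
  obtain ⟨z, -, hz⟩ := exists_ne_zero_of_sum_ne_zero hin
  set ε := min (φ x y) (φ z x)
  have hε : 0 < ε := lt_min ((hφ x y).lt_of_ne' hy) ((hφ z x).lt_of_ne' hz)
  have hεxy : ε ≤ φ x y := min_le_left _ _
  have hεzx : ε ≤ φ z x := min_le_right _ _
  refine ⟨φ + ε • (unitFlow z y - unitFlow x y - unitFlow z x), fun a b => ?_, ?_, ?_, ?_⟩
  · simp only [Pi.add_apply, Pi.smul_apply, Pi.sub_apply, unitFlow, smul_eq_mul, Pi.zero_apply]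
    have : 0 ≤ φ a b := hφ a b
    -- `(x, y)` and `(z, x)` coincide only if `x = y = z`, and then `(z, y)` is added back.
    split_ifs with h₁ h₂ h₃ h₃ h₂ h₃ h₃ <;> (try obtain ⟨rfl, rfl⟩ := h₂) <;>
      (try obtain ⟨rfl, rfl⟩ := h₃) <;> first | linarith | exact absurd ⟨rfl, rfl⟩ h₁
  · have hcycle : netFlow (unitFlow z y - unitFlow x y - unitFlow z x) = 0 := by
      simp only [map_sub, netFlow_unitFlow]
      abel
    rw [map_add, map_smul, hcycle, smul_zero, add_zero]
  · simp only [map_add, map_smul, map_sub, transportCost_unitFlow, smul_eq_mul]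
    nlinarith [htri z x y]
  · simp only [map_add, map_smul, map_sub, transportCost_unitFlow, smul_eq_mul, Pi.one_apply]
    linarith

theorem exists_isTransportPlan_transportCost_le {ρ : X → X → ℝ}
    (htri : ∀ x y z, ρ x z ≤ ρ x y + ρ y z) {φ : X → X → ℝ} (hφ : 0 ≤ φ) :
    ∃ ψ, IsTransportPlan (netFlow φ) ψ ∧ transportCost ρ ψ ≤ transportCost ρ φ := by
  set S := {χ : X → X → ℝ | 0 ≤ χ ∧ netFlow χ = netFlow φ ∧
    transportCost ρ χ ≤ transportCost ρ φ ∧ transportCost 1 χ ≤ transportCost 1 φ}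
  have hclosed : IsClosed S := by
    have hcost := (transportCost ρ).continuous_of_finiteDimensional
    have hmass := (transportCost (1 : X → X → ℝ)).continuous_of_finiteDimensional
    exact (isClosed_le continuous_const continuous_id).inter
      ((isClosed_eq netFlow.continuous_of_finiteDimensional continuous_const).inter
        ((isClosed_le hcost continuous_const).inter (isClosed_le hmass continuous_const)))
  obtain ⟨χ, hχ, hmin⟩ := (isCompact_of_forall_transportCost_one_le hclosed
    fun χ hχ => ⟨hχ.1, hχ.2.2.2⟩).exists_isMinOn ⟨φ, hφ, rfl, le_rfl, le_rfl⟩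
    (transportCost 1).continuous_of_finiteDimensional.continuousOn
  have hthrough : ∀ x, ∑ y, χ x y = 0 ∨ ∑ y, χ y x = 0 := by
    by_contra! h
    obtain ⟨x, hout, hin⟩ := h
    obtain ⟨χ', hχ'0, hnet, hcost, hmass⟩ := exists_shortcut htri hχ.1 hout hin
    exact hmass.not_ge (hmin ⟨hχ'0, hnet.trans hχ.2.1, hcost.trans hχ.2.2.1,
      hmass.le.trans hχ.2.2.2⟩)
  exact ⟨χ, hχ.2.1 ▸ isTransportPlan_netFlow hχ.1 hthrough, hχ.2.2.1⟩

theorem exists_lipschitz_transportCost_le_sum_mul {ρ : X → X → ℝ}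
    (hsymm : ∀ x y, ρ x y = ρ y x) (htri : ∀ x y z, ρ x z ≤ ρ x y + ρ y z)
    {v : X → ℝ} (hv : ∑ x, v x = 0) {ψ : X → X → ℝ}
    (hψ : IsMinOn (transportCost ρ) {ψ | IsTransportPlan v ψ} ψ) :
    ∃ f : X → ℝ, (∀ x y, |f x - f y| ≤ ρ x y) ∧ transportCost ρ ψ ≤ ∑ x, f x * v x := by
  have hρ := nonneg_of_symm_of_triangle hsymm htri
  obtain ⟨g, hgN, hgv⟩ := exists_linearMap_le_sublinear_eq (transshipmentCost ρ)
    (fun t ht => transshipmentCost_smul ρ ht) (transshipmentCost_add_le hρ) v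
  have hlip : ∀ x y, g (Pi.single x 1) - g (Pi.single y 1) ≤ ρ x y := fun x y => by
    rw [← map_sub, ← netFlow_unitFlow, ← transportCost_unitFlow ρ x y]
    exact (hgN _).trans (transshipmentCost_netFlow_le hρ (unitFlow_nonneg x y))
  refine ⟨fun x => g (Pi.single x 1),
    fun x y => abs_sub_le_iff.2 ⟨hlip x y, hsymm x y ▸ hlip y x⟩, ?_⟩
  rw [← LinearMap.apply_eq_sum_apply_single_mul, hgv, transshipmentCost, centered_of_sum_eq_zero hv]
  refine le_csInf (flowCosts_nonempty ρ hv) ?_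
  rintro _ ⟨φ, ⟨hφ, rfl⟩, rfl⟩
  obtain ⟨ψ', hψ', hle⟩ := exists_isTransportPlan_transportCost_le htri hφ
  exact (hψ hψ').trans hle

end Rerouting

theorem stmt_15_general (X : Type*) [Fintype X] [DecidableEq X]
    (ρ : X → X → ℝ)
    (hsymm : ∀ x y : X, ρ x y = ρ y x)
    (htri : ∀ x y z : X, ρ x z ≤ ρ x y + ρ y z)
    (v : X → ℝ) (hv : ∑ x : X, v x = 0) :
    ∃ C : ℝ,
      IsLeast {c : ℝ | ∃ ψ : X → X → ℝ,
          (∀ x y : X, 0 ≤ ψ x y) ∧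
          (∀ x : X, ∑ y : X, ψ x y = max (v x) 0) ∧
          (∀ y : X, ∑ x : X, ψ x y = max (-v y) 0) ∧
          c = ∑ x : X, ∑ y : X, ρ x y * ψ x y} C ∧
      IsGreatest {s : ℝ | ∃ f : X → ℝ,
          (∀ x y : X, |f x - f y| ≤ ρ x y) ∧
          s = ∑ x : X, f x * v x} C := by
  obtain ⟨ψ, hψ, hmin⟩ := exists_isMinOn_transportCost ρ hv
  obtain ⟨f, hf, hle⟩ := exists_lipschitz_transportCost_le_sum_mul hsymm htri hv hmin
  have weak : ∀ f : X → ℝ, (∀ x y, |f x - f y| ≤ ρ x y) → ∑ x, f x * v x ≤ transportCost ρ ψ :=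
    fun f hf => hψ.sum_mul_le_transportCost fun x y => (le_abs_self _).trans (hf x y)
  refine ⟨transportCost ρ ψ, ⟨⟨ψ, hψ.1, hψ.2.1, hψ.2.2, rfl⟩, ?_⟩,
    ⟨f, hf, hle.antisymm (weak f hf)⟩, ?_⟩
  · rintro _ ⟨ψ', h0, hrow, hcol, rfl⟩
    exact hmin ⟨h0, hrow, hcol⟩
  · rintro _ ⟨f', hf', rfl⟩
    exact weak f' hf'

theorem stmt_15 (X : Type*) [Fintype X] [DecidableEq X]
    (ρ : X → X → ℝ)
    (hsymm : ∀ x y : X, ρ x y = ρ y x)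
    (hpos : ∀ x y : X, x ≠ y → 0 < ρ x y)
    (hzero : ∀ x : X, ρ x x = 0)
    (htri : ∀ x y z : X, ρ x z ≤ ρ x y + ρ y z)
    (v : X → ℝ) (hv : ∑ x : X, v x = 0) :
    ∃ C : ℝ,
      IsLeast {c : ℝ | ∃ ψ : X → X → ℝ,
          (∀ x y : X, 0 ≤ ψ x y) ∧
          (∀ x : X, ∑ y : X, ψ x y = max (v x) 0) ∧
          (∀ y : X, ∑ x : X, ψ x y = max (-v y) 0) ∧
          c = ∑ x : X, ∑ y : X, ρ x y * ψ x y} C ∧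
      IsGreatest {s : ℝ | ∃ f : X → ℝ,
          (∀ x y : X, |f x - f y| ≤ ρ x y) ∧
          s = ∑ x : X, f x * v x} C :=
  stmt_15_general X ρ hsymm htri v hv
end
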